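/- (Existence and uniqueness for BSΔEs.) Consider the backward stochastic difference equation Y_{t+1} - Y_t = -f(ω, t+1, Y_{t+1}, Z_{t+1}) + Z_t M_{t+1} for t = 0,...,T-1 with terminal condition Y_T = η, where f is adapted and f(ω, T, y, z) does not depend on z. Assume f respects the equivalence ∼_M: if Z^1_t M_{t+1} = Z^2_t M_{t+1} for all t then f(ω,t,y,Z^1_t) = f(ω,t,y,Z^2_t). Then for any F_T-measurable η ∈ R^K there exists an adapted solution (Y, Z), with Y unique and Z unique up to the relation Z_t M_{t+1} = Z̃_t M_{t+1} for each t. Moreover Y_t = E[Y_{t+1} + f(ω,t+1,Y_{t+1},Z_{t+1}) | F_t]. -/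

import Mathlib

/-!
Since `F_{t+1}` refines `F_t` only by the observation of `W_{t+1}`, every `F_{t+1}`-measurable `G`
decomposes as `G = E[G | F_t] + z M_{t+1}` with `F_t`-measurable `z` (martingale representation).
Conversely, `E[M_{t+1} | F_t] = 0` forces `y = E[G | F_t]` in any decomposition
`G = y + z M_{t+1}` with `F_t`-measurable `y, z`. Applied backward from `Y_T = η` to
`G = Y_{t+1} + f(t+1, Y_{t+1}, Z_{t+1})`, the first fact constructs a solution and the second
shows, by backward induction, that any solution has the same `Y` and `Z M`, because `f` respects
`∼_M`.
-/

open Finset Matrix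

section Setup

variable {Ω : Type*} [Fintype Ω] [DecidableEq Ω] {N : ℕ}

/-- A probability on a finite sample space with everywhere-positive weights. -/
structure FinProb (Ω : Type*) [Fintype Ω] where
  p : Ω → ℝ
  pos : ∀ ω, 0 < p ω
  sum_one : ∑ ω, p ω = 1

/-- `ω` and `ω'` share the same `W`-path up to time `t` (the atoms of `F_t`). -/
def samePath (W : ℕ → Ω → Fin N) (t : ℕ) (ω ω' : Ω) : Prop :=
  ∀ s ∈ Finset.range (t + 1), W s ω = W s ω'

instance (W : ℕ → Ω → Fin N) (t : ℕ) (ω ω' : Ω) : Decidable (samePath W t ω ω') := by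
  unfold samePath; infer_instance

/-- `F_t`-measurability: `f` is constant on the atoms of `F_t`. -/
def measF (W : ℕ → Ω → Fin N) (t : ℕ) {α : Type*} (f : Ω → α) : Prop :=
  ∀ ω ω', samePath W t ω ω' → f ω = f ω'

/-- Conditional expectation given `F_t`. -/
noncomputable def cexp (P : FinProb Ω) (W : ℕ → Ω → Fin N) (t : ℕ)
    {E : Type*} [AddCommGroup E] [Module ℝ E] (Y : Ω → E) (ω : Ω) : E :=
  (∑ ω' ∈ univ.filter (fun ω' => samePath W t ω ω'), P.p ω')⁻¹ •
    ∑ ω' ∈ univ.filter (fun ω' => samePath W t ω ω'), P.p ω' • Y ω'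

/-- The basis-vector valued process `W_t ∈ {e_1,…,e_N} ⊆ ℝ^N`. -/
def wvec (W : ℕ → Ω → Fin N) (t : ℕ) (ω : Ω) : Fin N → ℝ :=
  fun j => if W t ω = j then 1 else 0

/-- `M_{t+1} = W_{t+1} - E[W_{t+1} | F_t]` (indexed so that `Mdiff P W t` is `M_{t+1}`). -/
noncomputable def Mdiff (P : FinProb Ω) (W : ℕ → Ω → Fin N) (t : ℕ) (ω : Ω) : Fin N → ℝ :=
  wvec W (t + 1) ω - cexp P W t (wvec W (t + 1)) ω

/-- One-step conditional transition probability `P_t^k = e_k^* E[W_{t+1}|F_t]`. -/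
noncomputable def Pt (P : FinProb Ω) (W : ℕ → Ω → Fin N) (t : ℕ) (k : Fin N) (ω : Ω) : ℝ :=
  cexp P W t (fun ω' => wvec W (t + 1) ω' k) ω

/-- The `N × (N-1)` matrix `Ĩ` whose top block is the identity and last row is all `-1`. -/
def Itil (n : ℕ) : Matrix (Fin (n + 1)) (Fin n) ℝ :=
  fun i j => if (i : ℕ) = (j : ℕ) then 1 else if (i : ℕ) = n then -1 else 0

end Setup

section Paths

variable {Ω : Type*} {N : ℕ} {W : ℕ → Ω → Fin N} {t : ℕ} {ω ω₁ ω₂ : Ω}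

lemma samePath_refl (W : ℕ → Ω → Fin N) (t : ℕ) (ω : Ω) : samePath W t ω ω := fun _ _ => rfl

lemma samePath.congr_left (h : samePath W t ω₁ ω₂) :
    samePath W t ω₁ ω ↔ samePath W t ω₂ ω :=
  ⟨fun h' s hs => (h s hs).symm.trans (h' s hs), fun h' s hs => (h s hs).trans (h' s hs)⟩

lemma samePath_succ_iff :
    samePath W (t + 1) ω₁ ω₂ ↔ samePath W t ω₁ ω₂ ∧ W (t + 1) ω₁ = W (t + 1) ω₂ := by
  simp only [samePath, Finset.range_add_one, Finset.forall_mem_insert]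
  exact and_comm

lemma measF_const {α : Type*} (a : α) : measF W t (fun _ : Ω => a) := fun _ _ _ => rfl

lemma wvec_eq_single (W : ℕ → Ω → Fin N) (t : ℕ) (ω : Ω) :
    wvec W t ω = Pi.single (W t ω) 1 := by
  funext j
  simp only [wvec, Pi.single_apply, eq_comm]

lemma sum_wvec (W : ℕ → Ω → Fin N) (t : ℕ) (ω : Ω) : ∑ j, wvec W t ω j = 1 := by
  simp [wvec_eq_single]

end Paths

section ConditionalExpectation

variable {Ω : Type*} [Fintype Ω] {N : ℕ} {P : FinProb Ω} {W : ℕ → Ω → Fin N}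
  {t : ℕ} {E F : Type*} [AddCommGroup E] [Module ℝ E] [AddCommGroup F] [Module ℝ F]

lemma cexp_congr_atom {Y Y' : Ω → E} {ω : Ω} (h : ∀ ω', samePath W t ω ω' → Y ω' = Y' ω') :
    cexp P W t Y ω = cexp P W t Y' ω := by
  unfold cexp
  congr 1
  exact Finset.sum_congr rfl fun ω' hω' => by rw [h ω' (Finset.mem_filter.1 hω').2]

lemma measF_cexp (Y : Ω → E) : measF W t (cexp P W t Y) := by
  intro ω₁ ω₂ h
  simp only [cexp, h.congr_left]

lemma cexp_of_measF {Y : Ω → E} (hY : measF W t Y) (ω : Ω) : cexp P W t Y ω = Y ω := by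
  have hmass : 0 < ∑ ω' ∈ univ.filter (fun ω' => samePath W t ω ω'), P.p ω' :=
    Finset.sum_pos (fun ω' _ => P.pos ω') ⟨ω, by simp [samePath_refl]⟩
  rw [cexp_congr_atom (Y' := fun _ => Y ω) fun ω' h => (hY ω ω' h).symm, cexp,
    ← Finset.sum_smul, smul_smul, inv_mul_cancel₀ hmass.ne', one_smul]

lemma cexp_sub (Y Y' : Ω → E) (ω : Ω) :
    cexp P W t (fun ω' => Y ω' - Y' ω') ω = cexp P W t Y ω - cexp P W t Y' ω := by
  simp only [cexp, smul_sub, Finset.sum_sub_distrib]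

lemma cexp_sum {ι : Type*} (s : Finset ι) (Y : ι → Ω → E) (ω : Ω) :
    cexp P W t (fun ω' => ∑ i ∈ s, Y i ω') ω = ∑ i ∈ s, cexp P W t (Y i) ω := by
  simp only [cexp, Finset.smul_sum]
  exact Finset.sum_comm

lemma cexp_map_of_measF {L : Ω → E →ₗ[ℝ] F} (hL : measF W t L) (Y : Ω → E) (ω : Ω) :
    cexp P W t (fun ω' => L ω' (Y ω')) ω = L ω (cexp P W t Y ω) := by
  rw [cexp_congr_atom (Y' := fun ω' => L ω (Y ω')) fun ω' h => by rw [hL ω ω' h]]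
  simp only [cexp, map_smul, map_sum]

lemma cexp_apply {K : ℕ} (Y : Ω → Fin K → ℝ) (ω : Ω) (k : Fin K) :
    cexp P W t Y ω k = cexp P W t (fun ω' => Y ω' k) ω :=
  (cexp_map_of_measF (L := fun _ => LinearMap.proj k) (measF_const _) Y ω).symm

lemma cexp_mulVec {K : ℕ} {A : Ω → Matrix (Fin K) (Fin N) ℝ} (hA : measF W t A)
    (v : Ω → Fin N → ℝ) (ω : Ω) :
    cexp P W t (fun ω' => A ω' *ᵥ v ω') ω = A ω *ᵥ cexp P W t v ω :=
  cexp_map_of_measF (L := fun ω' => (A ω').mulVecLin)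
    (fun ω₁ ω₂ h => congrArg mulVecLin (hA ω₁ ω₂ h)) v ω

lemma cexp_const_smul (c : ℝ) (Y : Ω → E) (ω : Ω) :
    cexp P W t (fun ω' => c • Y ω') ω = c • cexp P W t Y ω := by
  simp only [cexp, smul_comm _ c, Finset.smul_sum]

lemma Mdiff_eq (P : FinProb Ω) (W : ℕ → Ω → Fin N) (t : ℕ) (ω : Ω) :
    Mdiff P W t ω = wvec W (t + 1) ω - fun j => Pt P W t j ω := by
  funext j
  rw [Mdiff, Pi.sub_apply, cexp_apply]
  rfl

lemma cexp_Mdiff (ω : Ω) : cexp P W t (Mdiff P W t) ω = 0 :=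
  (cexp_sub _ _ ω).trans <| by rw [cexp_of_measF (measF_cexp _) ω, sub_self]

lemma cexp_wvec_mul_of_measF_succ {g : Ω → ℝ} (hg : measF W (t + 1) g) (ω : Ω) :
    cexp P W t (fun ω' => wvec W (t + 1) ω' (W (t + 1) ω) * g ω') ω
      = g ω * Pt P W t (W (t + 1) ω) ω := by
  have hatom : ∀ ω', samePath W t ω ω' → wvec W (t + 1) ω' (W (t + 1) ω) * g ω'
      = g ω • wvec W (t + 1) ω' (W (t + 1) ω) := by
    intro ω' h
    by_cases hW : W (t + 1) ω' = W (t + 1) ω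
    · rw [hg ω ω' (samePath_succ_iff.2 ⟨h, hW.symm⟩), smul_eq_mul, mul_comm]
    · simp [wvec, hW]
  rw [cexp_congr_atom hatom, cexp_const_smul, smul_eq_mul]
  rfl

end ConditionalExpectation

section Representation

variable {Ω : Type*} [Fintype Ω] {N K : ℕ} {P : FinProb Ω}
  {W : ℕ → Ω → Fin N} {t : ℕ}

/-- The `j`-th entry is `E[g | F_t, W_{t+1} = e_j]`. -/
noncomputable def reprCoeff (P : FinProb Ω) (W : ℕ → Ω → Fin N) (t : ℕ) (g : Ω → ℝ) (ω : Ω) :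
    Fin N → ℝ :=
  fun j => cexp P W t (fun ω' => wvec W (t + 1) ω' j * g ω') ω / Pt P W t j ω

noncomputable def reprMatrix (P : FinProb Ω) (W : ℕ → Ω → Fin N) (t : ℕ) (G : Ω → Fin K → ℝ)
    (ω : Ω) : Matrix (Fin K) (Fin N) ℝ :=
  Matrix.of fun k => reprCoeff P W t (fun ω' => G ω' k) ω

lemma reprCoeff_dotProduct_Mdiff {ω : Ω} (hpos : ∀ j, 0 < Pt P W t j ω) {g : Ω → ℝ}
    (hg : measF W (t + 1) g) :
    reprCoeff P W t g ω ⬝ᵥ Mdiff P W t ω = g ω - cexp P W t g ω := by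
  have hnext : reprCoeff P W t g ω (W (t + 1) ω) = g ω := by
    rw [reprCoeff, cexp_wvec_mul_of_measF_succ hg, mul_div_cancel_right₀ _ (hpos _).ne']
  have hmean : reprCoeff P W t g ω ⬝ᵥ (fun j => Pt P W t j ω) = cexp P W t g ω := by
    simp only [dotProduct, reprCoeff, div_mul_cancel₀ _ (hpos _).ne']
    rw [← cexp_sum]
    simp only [← Finset.sum_mul, sum_wvec, one_mul]
  rw [Mdiff_eq, dotProduct_sub, wvec_eq_single, dotProduct_single, mul_one, hnext, hmean]

lemma reprMatrix_mulVec_Mdiff {ω : Ω} (hpos : ∀ j, 0 < Pt P W t j ω) {G : Ω → Fin K → ℝ}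
    (hG : measF W (t + 1) G) :
    reprMatrix P W t G ω *ᵥ Mdiff P W t ω = G ω - cexp P W t G ω := by
  funext k
  rw [Pi.sub_apply, cexp_apply]
  exact reprCoeff_dotProduct_Mdiff hpos fun ω₁ ω₂ h => congrFun (hG ω₁ ω₂ h) k

lemma measF_reprMatrix (G : Ω → Fin K → ℝ) : measF W t (reprMatrix P W t G) := by
  intro ω₁ ω₂ h
  ext k j
  simp only [reprMatrix, reprCoeff, Pt, of_apply]
  rw [measF_cexp _ ω₁ ω₂ h, measF_cexp _ ω₁ ω₂ h]

lemma eq_cexp_of_eq_add_mulVec_Mdiff {G y : Ω → Fin K → ℝ} {z : Ω → Matrix (Fin K) (Fin N) ℝ}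
    (hy : measF W t y) (hz : measF W t z) (hG : ∀ ω, G ω = y ω + z ω *ᵥ Mdiff P W t ω)
    (ω : Ω) : y ω = cexp P W t G ω := by
  have hy' : y = fun ω' => G ω' - z ω' *ᵥ Mdiff P W t ω' := by
    funext ω'
    rw [hG, add_sub_cancel_right]
  rw [← cexp_of_measF hy ω, hy', cexp_sub, cexp_mulVec hz, cexp_Mdiff, mulVec_zero, sub_zero]

end Representation

section Driver

variable {Ω : Type*} {N K : ℕ} {W : ℕ → Ω → Fin N}
  {f : Ω → ℕ → (Fin K → ℝ) → Matrix (Fin K) (Fin N) ℝ → (Fin K → ℝ)}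

/-- `Y_s + f(s, Y_s, Z_s)`, whose `F_{s-1}`-conditional expectation is `Y_{s-1}`. -/
def drivenValue (f : Ω → ℕ → (Fin K → ℝ) → Matrix (Fin K) (Fin N) ℝ → (Fin K → ℝ)) (s : ℕ)
    (y : Ω → Fin K → ℝ) (z : Ω → Matrix (Fin K) (Fin N) ℝ) (ω : Ω) : Fin K → ℝ :=
  y ω + f ω s (y ω) (z ω)

lemma measF_drivenValue {s : ℕ} (hf : ∀ y z, measF W s (fun ω => f ω s y z))
    {y : Ω → Fin K → ℝ} {z : Ω → Matrix (Fin K) (Fin N) ℝ} (hy : measF W s y)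
    (hz : measF W s z) : measF W s (drivenValue f s y z) := by
  intro ω₁ ω₂ h
  rw [drivenValue, drivenValue, hy ω₁ ω₂ h, hz ω₁ ω₂ h]
  exact congrArg _ (hf _ _ ω₁ ω₂ h)

end Driver

section BSDE

variable {Ω : Type*} [Fintype Ω] {N K : ℕ} {P : FinProb Ω} {W : ℕ → Ω → Fin N}
  {f : Ω → ℕ → (Fin K → ℝ) → Matrix (Fin K) (Fin N) ℝ → (Fin K → ℝ)} {η : Ω → Fin K → ℝ} {T : ℕ}

structure IsBSDESolution (P : FinProb Ω) (W : ℕ → Ω → Fin N)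
    (f : Ω → ℕ → (Fin K → ℝ) → Matrix (Fin K) (Fin N) ℝ → (Fin K → ℝ)) (η : Ω → Fin K → ℝ)
    (T : ℕ) (Y : ℕ → Ω → Fin K → ℝ) (Z : ℕ → Ω → Matrix (Fin K) (Fin N) ℝ) : Prop where
  measF_Y : ∀ t ≤ T, measF W t (Y t)
  measF_Z : ∀ t < T, measF W t (Z t)
  step : ∀ t < T, ∀ ω, Y (t + 1) ω - Y t ω =
    -(f ω (t + 1) (Y (t + 1) ω) (Z (t + 1) ω)) + Z t ω *ᵥ Mdiff P W t ω
  terminal : ∀ ω, Y T ω = η ω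

namespace IsBSDESolution

variable {Y Y' : ℕ → Ω → Fin K → ℝ} {Z Z' : ℕ → Ω → Matrix (Fin K) (Fin N) ℝ}

lemma drivenValue_eq (h : IsBSDESolution P W f η T Y Z) {t : ℕ} (ht : t < T) (ω : Ω) :
    drivenValue f (t + 1) (Y (t + 1)) (Z (t + 1)) ω = Y t ω + Z t ω *ᵥ Mdiff P W t ω := by
  rw [drivenValue, ← sub_eq_iff_eq_add', ← eq_neg_add_iff_add_eq.1 (h.step t ht ω)]
  abel

lemma eq_cexp (h : IsBSDESolution P W f η T Y Z) {t : ℕ} (ht : t < T) (ω : Ω) :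
    Y t ω = cexp P W t (drivenValue f (t + 1) (Y (t + 1)) (Z (t + 1))) ω :=
  eq_cexp_of_eq_add_mulVec_Mdiff (h.measF_Y t ht.le) (h.measF_Z t ht) (h.drivenValue_eq ht) ω

/-- Backward induction: agreement of `Y` and of `Z M` at `t + 1` makes the drivers at `t + 1`
agree, since `f` ignores `z` at time `T` and respects `∼_M` before. -/
lemma unique (h : IsBSDESolution P W f η T Y Z) (h' : IsBSDESolution P W f η T Y' Z')
    (hfT : ∀ ω y z z', f ω T y z = f ω T y z')
    (hfeq : ∀ t, 1 ≤ t → t ≤ T - 1 →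
      ∀ Z1 Z2 : Ω → Matrix (Fin K) (Fin N) ℝ,
        (∀ ω, Z1 ω *ᵥ Mdiff P W t ω = Z2 ω *ᵥ Mdiff P W t ω) →
        ∀ ω y, f ω t y (Z1 ω) = f ω t y (Z2 ω))
    {t : ℕ} (ht : t ≤ T) :
    Y' t = Y t ∧ (t < T → ∀ ω, Z' t ω *ᵥ Mdiff P W t ω = Z t ω *ᵥ Mdiff P W t ω) := by
  induction ht using Nat.decreasingInduction with
  | self => exact ⟨funext fun ω => (h'.terminal ω).trans (h.terminal ω).symm, by omega⟩
  | of_succ s hs ih =>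
    obtain ⟨hY, hZ⟩ := ih
    have hdriven : drivenValue f (s + 1) (Y' (s + 1)) (Z' (s + 1))
        = drivenValue f (s + 1) (Y (s + 1)) (Z (s + 1)) := by
      funext ω
      rw [drivenValue, drivenValue, hY]
      congr 1
      rcases (show s + 1 ≤ T from hs).eq_or_lt with hT | hT
      · rw [hT]
        exact hfT ω _ _ _
      · exact hfeq (s + 1) (by omega) (by omega) _ _ (hZ hT) ω _
    have hYs : Y' s = Y s := funext fun ω => by rw [h'.eq_cexp hs, h.eq_cexp hs, hdriven]
    refine ⟨hYs, fun _ ω => ?_⟩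
    have hsum := h'.drivenValue_eq hs ω
    rw [hdriven, h.drivenValue_eq hs, hYs] at hsum
    exact (add_left_cancel hsum).symm

end IsBSDESolution

/-- The value `Z_T = 0` is arbitrary: a solution does not constrain `Z_T`. -/
noncomputable def bsdeSolution (P : FinProb Ω) (W : ℕ → Ω → Fin N)
    (f : Ω → ℕ → (Fin K → ℝ) → Matrix (Fin K) (Fin N) ℝ → (Fin K → ℝ)) (η : Ω → Fin K → ℝ)
    (T t : ℕ) : (Ω → Fin K → ℝ) × (Ω → Matrix (Fin K) (Fin N) ℝ) :=
  if t < T then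
    let G := drivenValue f (t + 1) (bsdeSolution P W f η T (t + 1)).1
      (bsdeSolution P W f η T (t + 1)).2
    (cexp P W t G, reprMatrix P W t G)
  else (η, 0)
termination_by T - t

lemma bsdeSolution_of_lt {t : ℕ} (ht : t < T) :
    bsdeSolution P W f η T t =
      (cexp P W t (drivenValue f (t + 1) (bsdeSolution P W f η T (t + 1)).1
          (bsdeSolution P W f η T (t + 1)).2),
        reprMatrix P W t (drivenValue f (t + 1) (bsdeSolution P W f η T (t + 1)).1
          (bsdeSolution P W f η T (t + 1)).2)) := by
  rw [bsdeSolution, if_pos ht]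

lemma bsdeSolution_self : bsdeSolution P W f η T T = (η, 0) := by
  rw [bsdeSolution, if_neg (lt_irrefl T)]

lemma isBSDESolution_bsdeSolution (hpos : ∀ t < T, ∀ j ω, 0 < Pt P W t j ω)
    (hf : ∀ t y z, measF W t (fun ω => f ω t y z)) (hη : measF W T η) :
    IsBSDESolution P W f η T (fun t => (bsdeSolution P W f η T t).1)
      (fun t => (bsdeSolution P W f η T t).2) := by
  have hmeas : ∀ t ≤ T, measF W t (bsdeSolution P W f η T t).1 ∧
      measF W t (bsdeSolution P W f η T t).2 := by
    intro t ht
    rcases ht.lt_or_eq with ht | rfl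
    · rw [bsdeSolution_of_lt ht]
      exact ⟨measF_cexp _, measF_reprMatrix _⟩
    · rw [bsdeSolution_self]
      exact ⟨hη, measF_const 0⟩
  refine ⟨fun t ht => (hmeas t ht).1, fun t ht => (hmeas t ht.le).2, fun t ht ω => ?_,
    fun ω => by rw [bsdeSolution_self]⟩
  have hG := measF_drivenValue (hf (t + 1)) (hmeas (t + 1) ht).1 (hmeas (t + 1) ht).2
  rw [bsdeSolution_of_lt ht, reprMatrix_mulVec_Mdiff (hpos t ht · ω) hG, drivenValue]
  abel

end BSDE

theorem stmt7_general {Ω : Type*} [Fintype Ω] {n K : ℕ}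
    (P : FinProb Ω) (W : ℕ → Ω → Fin (n + 1)) (T : ℕ)
    (hpos : ∀ t < T, ∀ k ω, 0 < Pt P W t k ω)
    (f : Ω → ℕ → (Fin K → ℝ) → Matrix (Fin K) (Fin (n + 1)) ℝ → (Fin K → ℝ))
    (hfad : ∀ t y z, measF W t (fun ω => f ω t y z))
    (hfT : ∀ ω y z z', f ω T y z = f ω T y z')
    (hfeq : ∀ t, 1 ≤ t → t ≤ T - 1 →
      ∀ Z1 Z2 : Ω → Matrix (Fin K) (Fin (n + 1)) ℝ,
        (∀ ω, (Z1 ω).mulVec (Mdiff P W t ω) = (Z2 ω).mulVec (Mdiff P W t ω)) →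
        ∀ ω y, f ω t y (Z1 ω) = f ω t y (Z2 ω))
    (η : Ω → Fin K → ℝ) (hη : measF W T η) :
    ∃ (Y : ℕ → Ω → Fin K → ℝ) (Z : ℕ → Ω → Matrix (Fin K) (Fin (n + 1)) ℝ),
      (∀ t ≤ T, measF W t (Y t)) ∧ (∀ t < T, measF W t (Z t)) ∧
      (∀ t < T, ∀ ω, Y (t + 1) ω - Y t ω =
          -(f ω (t + 1) (Y (t + 1) ω) (Z (t + 1) ω)) + (Z t ω).mulVec (Mdiff P W t ω)) ∧
      (∀ ω, Y T ω = η ω) ∧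
      (∀ t < T, ∀ ω, Y t ω =
          cexp P W t (fun ω' => Y (t + 1) ω' + f ω' (t + 1) (Y (t + 1) ω') (Z (t + 1) ω')) ω) ∧
      (∀ (Y' : ℕ → Ω → Fin K → ℝ) (Z' : ℕ → Ω → Matrix (Fin K) (Fin (n + 1)) ℝ),
        (∀ t ≤ T, measF W t (Y' t)) → (∀ t < T, measF W t (Z' t)) →
        (∀ t < T, ∀ ω, Y' (t + 1) ω - Y' t ω =
            -(f ω (t + 1) (Y' (t + 1) ω) (Z' (t + 1) ω)) + (Z' t ω).mulVec (Mdiff P W t ω)) →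
        (∀ ω, Y' T ω = η ω) →
        (∀ t ≤ T, ∀ ω, Y' t ω = Y t ω) ∧
        (∀ t < T, ∀ ω, (Z' t ω).mulVec (Mdiff P W t ω) = (Z t ω).mulVec (Mdiff P W t ω))) := by
  have hsol := isBSDESolution_bsdeSolution hpos hfad hη
  refine ⟨_, _, hsol.measF_Y, hsol.measF_Z, hsol.step, hsol.terminal,
    fun t ht ω => hsol.eq_cexp ht ω, fun Y' Z' hY' hZ' hstep hterm => ?_⟩
  have hunique t (ht : t ≤ T) := IsBSDESolution.unique hsol ⟨hY', hZ', hstep, hterm⟩ hfT hfeq ht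
  exact ⟨fun t ht ω => congrFun (hunique t ht).1 ω, fun t ht => (hunique t ht.le).2 ht⟩

/-- existence and uniqueness for the BSΔE. -/
theorem stmt7 {Ω : Type*} [Fintype Ω] [DecidableEq Ω] {n K : ℕ}
    (P : FinProb Ω) (W : ℕ → Ω → Fin (n + 1)) (T : ℕ) (hT : 1 ≤ T)
    (hpos : ∀ t < T, ∀ k ω, 0 < Pt P W t k ω)
    (f : Ω → ℕ → (Fin K → ℝ) → Matrix (Fin K) (Fin (n + 1)) ℝ → (Fin K → ℝ))
    (hfad : ∀ t y z, measF W t (fun ω => f ω t y z))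
    (hfT : ∀ ω y z z', f ω T y z = f ω T y z')
    (hfeq : ∀ t, 1 ≤ t → t ≤ T - 1 →
      ∀ Z1 Z2 : Ω → Matrix (Fin K) (Fin (n + 1)) ℝ,
        (∀ ω, (Z1 ω).mulVec (Mdiff P W t ω) = (Z2 ω).mulVec (Mdiff P W t ω)) →
        ∀ ω y, f ω t y (Z1 ω) = f ω t y (Z2 ω))
    (η : Ω → Fin K → ℝ) (hη : measF W T η) :
    ∃ (Y : ℕ → Ω → Fin K → ℝ) (Z : ℕ → Ω → Matrix (Fin K) (Fin (n + 1)) ℝ),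
      (∀ t ≤ T, measF W t (Y t)) ∧ (∀ t < T, measF W t (Z t)) ∧
      (∀ t < T, ∀ ω, Y (t + 1) ω - Y t ω =
          -(f ω (t + 1) (Y (t + 1) ω) (Z (t + 1) ω)) + (Z t ω).mulVec (Mdiff P W t ω)) ∧
      (∀ ω, Y T ω = η ω) ∧
      (∀ t < T, ∀ ω, Y t ω =
          cexp P W t (fun ω' => Y (t + 1) ω' + f ω' (t + 1) (Y (t + 1) ω') (Z (t + 1) ω')) ω) ∧
      (∀ (Y' : ℕ → Ω → Fin K → ℝ) (Z' : ℕ → Ω → Matrix (Fin K) (Fin (n + 1)) ℝ),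
        (∀ t ≤ T, measF W t (Y' t)) → (∀ t < T, measF W t (Z' t)) →
        (∀ t < T, ∀ ω, Y' (t + 1) ω - Y' t ω =
            -(f ω (t + 1) (Y' (t + 1) ω) (Z' (t + 1) ω)) + (Z' t ω).mulVec (Mdiff P W t ω)) →
        (∀ ω, Y' T ω = η ω) →
        (∀ t ≤ T, ∀ ω, Y' t ω = Y t ω) ∧
        (∀ t < T, ∀ ω, (Z' t ω).mulVec (Mdiff P W t ω) = (Z t ω).mulVec (Mdiff P W t ω))) :=
  stmt7_general P W T hpos f hfad hfT hfeq η hη
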